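/- arXiv:1806.02659 — 5 statements merged into one kernel-verified Lean document; each statement's English description precedes it below -/
import Mathlib

section
/- For any real numbers a, b > 0, the integral over λ from 0 to ∞ of (a / √(2πλ)) · exp(−(a²λ + b²λ⁻¹)/2) dλ equals exp(−|a·b|) = exp(−a·b). -/
/-!
Substituting `l = x²` turns the integrand into a constant multiple of
`exp (-(a x - b / x)² / 2)`, because `(a x - b / x)² = a² x² + b² / x² - 2ab`.
By the Cauchy–Schlömilch transformation, the integral over `x > 0` of an even integrable
function of `α x - β / x` is `1 / (2α)` times its integral over `ℝ`: the substitution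
`u = α x - β / x` has Jacobian `α + β / x²`, and the involution `x ↦ β / (α x)`, which maps
`u` to `-u`, shows that the two halves of this Jacobian contribute equally. The Gaussian
integral `√(2π)` then finishes the computation.
-/

open MeasureTheory Real Set

variable {E : Type*} [NormedAddCommGroup E] [NormedSpace ℝ E]

theorem integral_comp_sq_Ioi (g : ℝ → E) :
    ∫ x in Ioi (0:ℝ), (2 * x) • g (x ^ 2) = ∫ l in Ioi (0:ℝ), g l := by
  rw [← integral_comp_rpow_Ioi_of_pos (g := g) two_pos]
  refine setIntegral_congr_fun measurableSet_Ioi fun x _ => ?_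
  norm_num

theorem integral_comp_const_div_Ioi {c : ℝ} (hc : 0 < c) (g : ℝ → E) :
    ∫ x in Ioi (0:ℝ), (c / x ^ 2) • g (c / x) = ∫ x in Ioi (0:ℝ), g x := by
  have hderiv : ∀ x ∈ Ioi (0:ℝ), HasDerivWithinAt (c / ·) (-(c / x ^ 2)) (Ioi 0) x := by
    intro x hx
    simpa [div_eq_mul_inv] using ((hasDerivAt_inv (ne_of_gt hx)).const_mul c).hasDerivWithinAt
  have hinj : InjOn (c / ·) (Ioi (0:ℝ)) := fun x _ y _ h => by
    simpa [div_div_cancel₀ hc.ne'] using congrArg (c / ·) h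
  have himage : (c / ·) '' Ioi (0:ℝ) = Ioi 0 := by
    refine Subset.antisymm (image_subset_iff.2 fun x hx => div_pos hc hx) fun y hy => ?_
    exact ⟨c / y, div_pos hc hy, div_div_cancel₀ hc.ne'⟩
  have hcov := integral_image_eq_integral_abs_deriv_smul measurableSet_Ioi hderiv hinj g
  rw [himage] at hcov
  rw [hcov]
  refine setIntegral_congr_fun measurableSet_Ioi fun x hx => ?_
  rw [abs_neg, abs_of_pos (div_pos hc (pow_pos hx 2))]

theorem hasDerivAt_mul_sub_div (α β : ℝ) {x : ℝ} (hx : x ≠ 0) :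
    HasDerivAt (fun x => α * x - β / x) (α + β / x ^ 2) x := by
  simpa only [mul_one, mul_neg, sub_neg_eq_add, ← div_eq_mul_inv] using
    ((hasDerivAt_id' x).const_mul α).fun_sub ((hasDerivAt_inv hx).const_mul β)

theorem strictMonoOn_mul_sub_div {α β : ℝ} (hα : 0 < α) (hβ : 0 ≤ β) :
    StrictMonoOn (fun x => α * x - β / x) (Ioi 0) := fun x hx y _ hxy => by
  have h1 : α * x < α * y := mul_lt_mul_of_pos_left hxy hα
  have h2 : β / y ≤ β / x := div_le_div_of_nonneg_left hβ hx hxy.le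
  simp only
  linarith

theorem image_mul_sub_div_Ioi {α β : ℝ} (hα : 0 < α) (hβ : 0 < β) :
    (fun x => α * x - β / x) '' Ioi 0 = univ := by
  refine eq_univ_of_forall fun t => ?_
  obtain ⟨s, hs, hs2⟩ : ∃ s, 0 ≤ s ∧ s ^ 2 = t ^ 2 + 4 * α * β :=
    ⟨_, sqrt_nonneg _, sq_sqrt (by positivity)⟩
  have hts : 0 < t + s := by nlinarith
  refine ⟨(t + s) / (2 * α), mem_Ioi.2 (by positivity), ?_⟩
  field_simp
  linear_combination hs2

theorem integral_comp_mul_sub_div_Ioi {f : ℝ → E} (hf : Integrable f)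
    (heven : ∀ u, f (-u) = f u) {α β : ℝ} (hα : 0 < α) (hβ : 0 < β) :
    ∫ x in Ioi (0:ℝ), f (α * x - β / x) = (2 * α)⁻¹ • ∫ u, f u := by
  set φ : ℝ → ℝ := fun x => α * x - β / x with hφ
  have hderiv : ∀ x ∈ Ioi (0:ℝ), HasDerivWithinAt φ (α + β / x ^ 2) (Ioi 0) x :=
    fun x hx => (hasDerivAt_mul_sub_div α β (ne_of_gt hx)).hasDerivWithinAt
  have hinj : InjOn φ (Ioi 0) := (strictMonoOn_mul_sub_div hα hβ.le).injOn
  have hweight : ∀ x ∈ Ioi (0:ℝ), |α + β / x ^ 2| = α + β / x ^ 2 := fun x hx =>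
    abs_of_pos (by have := mem_Ioi.1 hx; positivity)
  have himage : φ '' Ioi 0 = univ := image_mul_sub_div_Ioi hα hβ
  have hcov := integral_image_eq_integral_abs_deriv_smul measurableSet_Ioi hderiv hinj f
  rw [himage, Measure.restrict_univ] at hcov
  have hint := (integrableOn_image_iff_integrableOn_abs_deriv_smul measurableSet_Ioi hderiv
    hinj f).1 (himage ▸ hf.integrableOn)
  have hswap :
      ∫ x in Ioi (0:ℝ), (β / x ^ 2) • f (φ x) = ∫ x in Ioi (0:ℝ), α • f (φ x) := by
    rw [← integral_comp_const_div_Ioi (div_pos hβ hα)]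
    refine setIntegral_congr_fun measurableSet_Ioi fun x hx => ?_
    have hx0 : x ≠ 0 := ne_of_gt hx
    have : φ (β / α / x) = -φ x := by simp only [hφ]; field_simp; ring
    rw [this, heven, smul_smul]
    congr 1
    field_simp
  have hintα : IntegrableOn (fun x => α • f (φ x)) (Ioi 0) := by
    have hratio : ∀ x ∈ Ioi (0:ℝ), ‖α / (α + β / x ^ 2)‖ ≤ 1 := fun x hx => by
      have : 0 < β / x ^ 2 := by have := mem_Ioi.1 hx; positivity
      rw [norm_div, Real.norm_of_nonneg hα.le, Real.norm_of_nonneg (by positivity)]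
      exact div_le_one_of_le₀ (by linarith) (by positivity)
    have hbdd := hint.bdd_smul 1 (Measurable.aestronglyMeasurable (by fun_prop))
      (ae_restrict_of_forall_mem measurableSet_Ioi hratio)
    refine IntegrableOn.congr_fun hbdd (fun x hx => ?_) measurableSet_Ioi
    have : 0 < α + β / x ^ 2 := by have := mem_Ioi.1 hx; positivity
    simp only [Pi.smul_apply', hweight x hx, smul_smul, div_mul_cancel₀ _ this.ne']
  have hintβ : IntegrableOn (fun x => (β / x ^ 2) • f (φ x)) (Ioi 0) := by
    refine (hint.sub hintα).congr_fun (fun x hx => ?_) measurableSet_Ioi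
    simp only [Pi.sub_apply, hweight x hx, add_smul, add_sub_cancel_left]
  have : ∫ u, f u = (2 * α) • ∫ x in Ioi (0:ℝ), f (φ x) := by
    rw [hcov, setIntegral_congr_fun measurableSet_Ioi fun x hx => by rw [hweight x hx, add_smul],
      integral_add hintα hintβ, hswap, integral_smul, two_mul, add_smul]
  rw [this, smul_smul, inv_mul_cancel₀ (by positivity), one_smul]

theorem integral_exp_neg_sq_div_two : ∫ u : ℝ, exp (-u ^ 2 / 2) = √(2 * π) := by
  have h := integral_gaussian (1 / 2)
  rw [show π / (1 / 2) = 2 * π by ring] at h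
  rw [← h]
  congr with u
  ring_nf

theorem andrews_mallows (a b : ℝ) (ha : 0 < a) (hb : 0 < b) :
    ∫ l in Ioi (0:ℝ), a / Real.sqrt (2 * π * l) *
      Real.exp (-(a ^ 2 * l + b ^ 2 * l⁻¹) / 2) = Real.exp (-(a * b)) := by
  have hsq : ∀ x ∈ Ioi (0:ℝ), (2 * x) • (a / √(2 * π * x ^ 2) *
      exp (-(a ^ 2 * x ^ 2 + b ^ 2 * (x ^ 2)⁻¹) / 2))
      = (2 * a / √(2 * π) * exp (-(a * b))) * exp (-(a * x - b / x) ^ 2 / 2) := by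
    intro x (hx : 0 < x)
    rw [smul_eq_mul, sqrt_mul (by positivity), sqrt_sq hx.le, mul_assoc _ (exp _), ← exp_add]
    field_simp
    congr 1
    ring
  have hgauss_even : ∀ u : ℝ, exp (-(-u) ^ 2 / 2) = exp (-u ^ 2 / 2) := fun u => by ring_nf
  rw [← integral_comp_sq_Ioi, setIntegral_congr_fun measurableSet_Ioi hsq, integral_const_mul,
    integral_comp_mul_sub_div_Ioi (f := fun u => exp (-u ^ 2 / 2)) ?_ hgauss_even ha hb,
    integral_exp_neg_sq_div_two, smul_eq_mul]
  · field_simp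
  · simpa [neg_div, div_eq_inv_mul] using integrable_exp_neg_mul_sq (one_half_pos (α := ℝ))
end

section
/- For any real number b, the integral over λ from 0 to ∞ of (2πλ)^(−1/2) · exp(−(b + λ)²/(2λ)) dλ equals exp(−2·max{b, 0}). -/
/-! Expanding the square, `-(b + λ)² / (2λ) = -b - (λ + b²/λ) / 2`, so the integral is `e^{-b}` times
the Andrews–Mallows integral `∫ (2πλ)^{-1/2} e^{-(λ + c²/λ)/2} dλ = e^{-|c|}`, and `b + |b| = 2 max b 0`.
After `λ = t²` the Andrews–Mallows integral becomes a Gaussian one, because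
`t² + c²/t² = (t - |c|/t)² + 2|c|`. The Cauchy–Schlömilch substitution `u = t - a/t` maps `(0, ∞)`
onto `ℝ` with `du = (1 + a/t²) dt`, and `t ↦ a/t` turns the part `f (t - a/t) a/t² dt` back into
`f (t - a/t) dt` when `f` is even, so `∫₀^∞ f (t - a/t) dt = ½ ∫ f`. -/

open MeasureTheory Real Set

section CauchySchlomilch

variable {a : ℝ}

lemma image_div_Ioi_zero (ha : 0 < a) : (fun t : ℝ => a / t) '' Ioi 0 = Ioi 0 := by
  ext y
  refine ⟨?_, fun hy => ⟨a / y, div_pos ha hy, div_div_cancel₀ ha.ne'⟩⟩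
  rintro ⟨t, ht, rfl⟩
  exact div_pos ha ht

lemma integral_Ioi_div_sq_smul_comp_div {E : Type*} [NormedAddCommGroup E] [NormedSpace ℝ E]
    (ha : 0 < a) (g : ℝ → E) :
    ∫ t in Ioi 0, (a / t ^ 2) • g (a / t) = ∫ t in Ioi 0, g t := by
  have hderiv : ∀ t ∈ Ioi (0 : ℝ), HasDerivWithinAt (fun t => a / t) (-(a / t ^ 2)) (Ioi 0) t :=
    fun t ht => by
      simpa [div_eq_mul_inv] using ((hasDerivAt_inv (ne_of_gt ht)).const_mul a).hasDerivWithinAt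
  have hinj : InjOn (fun t : ℝ => a / t) (Ioi 0) := fun (x : ℝ) _ (y : ℝ) _ h =>
    inv_injective (mul_left_cancel₀ ha.ne' h)
  conv_rhs => rw [← image_div_Ioi_zero ha,
    integral_image_eq_integral_abs_deriv_smul measurableSet_Ioi hderiv hinj]
  refine setIntegral_congr_fun measurableSet_Ioi fun t (ht : 0 < t) => ?_
  rw [abs_neg, abs_of_pos (div_pos ha (pow_pos ht 2))]

lemma hasDerivAt_sub_div {t : ℝ} (ht : t ≠ 0) :
    HasDerivAt (fun t => t - a / t) (1 + a / t ^ 2) t := by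
  refine ((hasDerivAt_id' t).sub ((hasDerivAt_const t a).div (hasDerivAt_id' t) ht)).congr_deriv ?_
  field_simp
  ring

lemma injOn_sub_div (ha : 0 ≤ a) : InjOn (fun t : ℝ => t - a / t) (Ioi 0) := by
  intro x hx y hy h
  have hx : 0 < x := hx
  have hy : 0 < y := hy
  have : (x - y) * (x * y + a) = 0 := by
    field_simp at h
    linear_combination h
  rcases mul_eq_zero.mp this with h | h
  · linarith
  · nlinarith [mul_pos hx hy]

lemma image_sub_div_Ioi_zero (ha : 0 < a) : (fun t : ℝ => t - a / t) '' Ioi 0 = univ := by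
  refine eq_univ_of_forall fun y => ?_
  have hs : √(y ^ 2 + 4 * a) ^ 2 = y ^ 2 + 4 * a := sq_sqrt (by positivity)
  have hy : |y| < √(y ^ 2 + 4 * a) := by
    rw [← sqrt_sq_eq_abs]
    exact sqrt_lt_sqrt (sq_nonneg _) (by linarith)
  have hpos : 0 < y + √(y ^ 2 + 4 * a) := by linarith [neg_abs_le y]
  refine ⟨(y + √(y ^ 2 + 4 * a)) / 2, half_pos hpos, ?_⟩
  field_simp
  linear_combination hs

theorem integral_Ioi_comp_sub_div_of_even {f : ℝ → ℝ} (hf : Integrable f)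
    (heven : ∀ u, f (-u) = f u) (ha : 0 ≤ a) :
    ∫ t in Ioi 0, f (t - a / t) = (∫ u, f u) / 2 := by
  rcases ha.eq_or_lt with rfl | ha
  · have habs : ∀ u, f |u| = f u := fun u => by
      rcases abs_choice u with h | h <;> simp only [h, heven]
    have hhalf := integral_comp_abs (f := f)
    simp only [habs] at hhalf
    simp only [zero_div, sub_zero]
    linarith
  set g : ℝ → ℝ := fun t => t - a / t with hg
  have hderiv : ∀ t ∈ Ioi (0 : ℝ), HasDerivWithinAt g (1 + a / t ^ 2) (Ioi 0) t :=
    fun t ht => (hasDerivAt_sub_div (ne_of_gt ht)).hasDerivWithinAt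
  have habs_deriv : ∀ t ∈ Ioi (0 : ℝ), |1 + a / t ^ 2| = 1 + a / t ^ 2 := fun t _ =>
    abs_of_pos (by positivity)
  have hchange : ∫ u, f u = ∫ t in Ioi 0, (1 + a / t ^ 2) * f (g t) := by
    rw [← setIntegral_univ, ← image_sub_div_Ioi_zero ha,
      integral_image_eq_integral_abs_deriv_smul measurableSet_Ioi hderiv (injOn_sub_div ha.le)]
    exact setIntegral_congr_fun measurableSet_Ioi fun t ht => by rw [habs_deriv t ht, smul_eq_mul]
  have hint : IntegrableOn (fun t => (1 + a / t ^ 2) * f (g t)) (Ioi 0) := by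
    have := (integrableOn_image_iff_integrableOn_abs_deriv_smul measurableSet_Ioi hderiv
      (injOn_sub_div ha.le) f).mp (by rw [image_sub_div_Ioi_zero ha]; exact hf.integrableOn)
    exact this.congr_fun (fun t ht => by simp only [habs_deriv t ht, smul_eq_mul]) measurableSet_Ioi
  have hint_comp : IntegrableOn (fun t => f (g t)) (Ioi 0) := by
    refine IntegrableOn.congr_fun (hint.bdd_mul (f := fun t => (1 + a / t ^ 2)⁻¹) (c := 1) ?_ ?_)
      (fun t (ht : 0 < t) => ?_) measurableSet_Ioi
    · exact (by fun_prop : Measurable fun t : ℝ => (1 + a / t ^ 2)⁻¹).aestronglyMeasurable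
    · filter_upwards [ae_restrict_mem measurableSet_Ioi] with t (ht : 0 < t)
      rw [norm_inv, Real.norm_of_nonneg (by positivity)]
      exact inv_le_one_of_one_le₀ (le_add_of_nonneg_right (by positivity))
    · field_simp
  have hreflect : ∫ t in Ioi 0, (a / t ^ 2) * f (g t) = ∫ t in Ioi 0, f (g t) := by
    rw [← integral_Ioi_div_sq_smul_comp_div ha fun t => f (g t)]
    refine setIntegral_congr_fun measurableSet_Ioi fun t (ht : 0 < t) => ?_
    have : g (a / t) = -g t := by simp only [hg]; field_simp; ring
    rw [this, heven, smul_eq_mul]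
  have hsplit : ∫ t in Ioi 0, (a / t ^ 2) * f (g t)
      = (∫ t in Ioi 0, (1 + a / t ^ 2) * f (g t)) - ∫ t in Ioi 0, f (g t) := by
    rw [← integral_sub hint hint_comp]
    congr 1 with t
    ring
  linarith

end CauchySchlomilch

theorem integral_Ioi_rpow_neg_half_mul_exp_neg_add_sq_div (c : ℝ) :
    ∫ l in Ioi (0 : ℝ), (2 * π * l) ^ (-(1 : ℝ) / 2) * exp (-(l + c ^ 2 / l) / 2) = exp (-|c|) := by
  have hsubst : ∀ t ∈ Ioi (0 : ℝ),
      (2 * t ^ ((2 : ℝ) - 1)) • ((2 * π * t ^ (2 : ℝ)) ^ (-(1 : ℝ) / 2) *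
        exp (-(t ^ (2 : ℝ) + c ^ 2 / t ^ (2 : ℝ)) / 2))
      = 2 / √(2 * π) * exp (-|c|) * exp (-(1 / 2) * (t - |c| / t) ^ 2) := by
    intro t (ht : 0 < t)
    have hrpow : (2 * π * t ^ 2) ^ (-(1 : ℝ) / 2) = (√(2 * π) * t)⁻¹ := by
      rw [show -(1 : ℝ) / 2 = -(1 / 2) by ring, rpow_neg (by positivity), ← sqrt_eq_rpow,
        sqrt_mul (by positivity), sqrt_sq ht.le]
    have hsq : -(t ^ 2 + c ^ 2 / t ^ 2) / 2 = -|c| + -(1 / 2) * (t - |c| / t) ^ 2 := by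
      field_simp
      linear_combination sq_abs c
    rw [show (2 : ℝ) - 1 = 1 by norm_num, rpow_one, rpow_two, hrpow, hsq, exp_add, smul_eq_mul]
    field_simp
  rw [← integral_comp_rpow_Ioi_of_pos two_pos, setIntegral_congr_fun measurableSet_Ioi hsubst,
    integral_const_mul, integral_Ioi_comp_sub_div_of_even (integrable_exp_neg_mul_sq one_half_pos)
      (by simp) (abs_nonneg c), integral_gaussian]
  field_simp

theorem mixture_hinge (b : ℝ) :
    ∫ l in Ioi (0:ℝ), (2 * π * l) ^ (-(1:ℝ)/2) *
      Real.exp (-(b + l) ^ 2 / (2 * l)) = Real.exp (-2 * max b 0) := by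
  have hfactor : ∀ l ∈ Ioi (0 : ℝ), (2 * π * l) ^ (-(1:ℝ)/2) * exp (-(b + l) ^ 2 / (2 * l))
      = exp (-b) * ((2 * π * l) ^ (-(1:ℝ)/2) * exp (-(l + b ^ 2 / l) / 2)) := by
    intro l (hl : 0 < l)
    rw [mul_left_comm, ← exp_add]
    congr 2
    field_simp
    ring
  have hhinge : -b + -|b| = -2 * max b 0 := by
    rcases le_total b 0 with hb | hb
    · rw [abs_of_nonpos hb, max_eq_right hb]; ring
    · rw [abs_of_nonneg hb, max_eq_left hb]; ring
  rw [setIntegral_congr_fun measurableSet_Ioi hfactor, integral_const_mul,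
    integral_Ioi_rpow_neg_half_mul_exp_neg_add_sq_div, ← exp_add, hhinge]
end

section
/- For any real numbers a, b with a > 0, the integral over λ from 0 to ∞ of (a/√(2πλ)) · exp(−(a²λ + b²/λ)/2) dλ equals exp(−a·|b|). -/
/-!
Substituting `l = u²` turns the integrand into `2a/√(2π) · e^{-a|b|} · exp(-(au - |b|/u)²/2)`,
so with `K = a|b|` everything reduces to the Cauchy–Schlömilch identity
`∫₀^∞ f(v - K/v) dv = ∫₀^∞ f(v) dv` for the even function `f(x) = exp(-x²/2)`.
For `K > 0` the map `v ↦ v - K/v` is a bijection of `(0, ∞)` onto `ℝ` with Jacobian `1 + K/v²`,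
and the involution `v ↦ K/v`, which only changes the sign of `v - K/v`, shows that the `K/v²`
part of the Jacobian contributes exactly as much as the `1` part.
-/

open MeasureTheory Real Set

lemma hasDerivAt_const_div (K : ℝ) {v : ℝ} (hv : v ≠ 0) :
    HasDerivAt (fun v => K / v) (-(K / v ^ 2)) v := by
  simpa only [div_eq_mul_inv, mul_neg] using (hasDerivAt_inv hv).const_mul K

lemma hasDerivAt_sub_const_div (K : ℝ) {v : ℝ} (hv : v ≠ 0) :
    HasDerivAt (fun v => v - K / v) (1 + K / v ^ 2) v := by
  simpa only [sub_neg_eq_add] using (hasDerivAt_id' v).fun_sub (hasDerivAt_const_div K hv)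

section CauchySchlomilch

variable {K : ℝ}

lemma strictMonoOn_sub_const_div (hK : 0 ≤ K) : StrictMonoOn (fun v => v - K / v) (Ioi 0) :=
  fun _ hx _ _ hxy => by dsimp only; linarith [div_le_div_of_nonneg_left hK hx hxy.le]

lemma injOn_const_div (hK : K ≠ 0) : InjOn (fun v => K / v) (Ioi 0) := by
  intro x _ y _ hxy
  simpa [div_eq_mul_inv, hK] using hxy

lemma image_const_div_Ioi (hK : 0 < K) : (fun v => K / v) '' Ioi 0 = Ioi 0 := by
  refine Subset.antisymm (image_subset_iff.2 fun v hv => div_pos hK hv) fun y hy => ?_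
  exact ⟨K / y, div_pos hK hy, div_div_cancel₀ hK.ne'⟩

lemma integral_Ioi_comp_const_div {E : Type*} [NormedAddCommGroup E] [NormedSpace ℝ E]
    (hK : 0 < K) (g : ℝ → E) :
    ∫ v in Ioi 0, (K / v ^ 2) • g (K / v) = ∫ v in Ioi 0, g v := by
  have h := integral_image_eq_integral_abs_deriv_smul measurableSet_Ioi
    (fun v hv => (hasDerivAt_const_div K (ne_of_gt hv)).hasDerivWithinAt) (injOn_const_div hK.ne') g
  rw [image_const_div_Ioi hK] at h
  rw [h]
  refine setIntegral_congr_fun measurableSet_Ioi fun v hv => ?_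
  rw [abs_neg, abs_of_pos (div_pos hK (pow_pos hv 2))]

lemma image_sub_const_div_Ioi (hK : 0 < K) : (fun v => v - K / v) '' Ioi 0 = univ := by
  refine eq_univ_of_forall fun y => ?_
  set s := √(y ^ 2 + 4 * K)
  have hs : s ^ 2 = y ^ 2 + 4 * K := sq_sqrt (by positivity)
  have hys : 0 < y + s := by
    nlinarith [sqrt_nonneg (y ^ 2 + 4 * K), neg_abs_le y, sq_abs y, abs_nonneg y]
  refine ⟨(y + s) / 2, half_pos hys, ?_⟩
  field_simp
  nlinarith

theorem integral_Ioi_comp_sub_const_div_of_even {f : ℝ → ℝ} (hf : Integrable f)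
    (heven : ∀ x, f (-x) = f x) (hK : 0 ≤ K) :
    ∫ v in Ioi 0, f (v - K / v) = ∫ v in Ioi 0, f v := by
  rcases hK.eq_or_lt with rfl | hK
  · simp
  have hderiv : ∀ v ∈ Ioi (0 : ℝ),
      HasDerivWithinAt (fun v => v - K / v) (1 + K / v ^ 2) (Ioi 0) v :=
    fun v hv => (hasDerivAt_sub_const_div K (ne_of_gt hv)).hasDerivWithinAt
  have hinj := (strictMonoOn_sub_const_div hK.le).injOn
  have habs : ∀ v ∈ Ioi (0 : ℝ),
      |1 + K / v ^ 2| • f (v - K / v) = (1 + K / v ^ 2) * f (v - K / v) := fun v _ => by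
    rw [abs_of_pos (by positivity), smul_eq_mul]
  have hweighted_int : IntegrableOn (fun v => (1 + K / v ^ 2) * f (v - K / v)) (Ioi 0) := by
    refine IntegrableOn.congr_fun ?_ habs measurableSet_Ioi
    rw [← integrableOn_image_iff_integrableOn_abs_deriv_smul measurableSet_Ioi hderiv hinj,
      image_sub_const_div_Ioi hK]
    exact hf.integrableOn
  have hweighted : ∫ v in Ioi 0, (1 + K / v ^ 2) * f (v - K / v) = 2 * ∫ v in Ioi 0, f v := by
    rw [← setIntegral_congr_fun measurableSet_Ioi habs,
      ← integral_image_eq_integral_abs_deriv_smul measurableSet_Ioi hderiv hinj,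
      image_sub_const_div_Ioi hK, Measure.restrict_univ, ← integral_comp_abs]
    congr 1 with x
    rcases abs_choice x with h | h <;> simp [h, heven]
  have hint : IntegrableOn (fun v => f (v - K / v)) (Ioi 0) := by
    refine IntegrableOn.congr_fun
      (f := fun v => (1 + K / v ^ 2)⁻¹ * ((1 + K / v ^ 2) * f (v - K / v)))
      (hweighted_int.bdd_mul (c := 1) ?_ ?_) (fun v _ => ?_) measurableSet_Ioi
    · exact (by fun_prop : Measurable fun v : ℝ => (1 + K / v ^ 2)⁻¹).aestronglyMeasurable
    · refine ae_restrict_of_forall_mem measurableSet_Ioi fun v _ => ?_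
      rw [norm_inv, norm_of_nonneg (by positivity)]
      exact inv_le_one_of_one_le₀ (le_add_of_nonneg_right (by positivity))
    · have : 1 + K / v ^ 2 ≠ 0 := by positivity
      field_simp
  have hsymm : ∫ v in Ioi 0, K / v ^ 2 * f (v - K / v) = ∫ v in Ioi 0, f (v - K / v) := by
    refine Eq.trans (setIntegral_congr_fun measurableSet_Ioi fun v hv => ?_)
      (integral_Ioi_comp_const_div hK fun v => f (v - K / v))
    rw [smul_eq_mul, div_div_cancel₀ hK.ne', ← neg_sub, heven]
  have hsplit : ∫ v in Ioi 0, K / v ^ 2 * f (v - K / v) =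
      (∫ v in Ioi 0, (1 + K / v ^ 2) * f (v - K / v)) - ∫ v in Ioi 0, f (v - K / v) := by
    rw [← integral_sub hweighted_int hint]
    congr 1 with v
    ring
  linarith

lemma integral_Ioi_exp_neg_half_sub_const_div_sq (hK : 0 ≤ K) :
    ∫ v in Ioi 0, exp (-(1 / 2) * (v - K / v) ^ 2) = √(2 * π) / 2 := by
  calc ∫ v in Ioi 0, exp (-(1 / 2) * (v - K / v) ^ 2)
      = ∫ v in Ioi 0, exp (-(1 / 2) * v ^ 2) :=
        integral_Ioi_comp_sub_const_div_of_even (integrable_exp_neg_mul_sq one_half_pos)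
          (fun x => by rw [neg_sq]) hK
    _ = √(2 * π) / 2 := by
        rw [integral_gaussian_Ioi]
        ring_nf

end CauchySchlomilch

theorem integral_Ioi_comp_sq {E : Type*} [NormedAddCommGroup E] [NormedSpace ℝ E] (g : ℝ → E) :
    ∫ u in Ioi 0, (2 * u) • g (u ^ 2) = ∫ l in Ioi 0, g l := by
  rw [← integral_comp_rpow_Ioi_of_pos (g := g) two_pos]
  refine setIntegral_congr_fun measurableSet_Ioi fun u _ => ?_
  norm_num [rpow_two]

lemma two_mul_smul_andrewsMallows_integrand_sq {a : ℝ} (ha : 0 < a) (b : ℝ) {u : ℝ} (hu : 0 < u) :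
    (2 * u) • (a / √(2 * π * u ^ 2) * exp (-(a ^ 2 * u ^ 2 + b ^ 2 / u ^ 2) / 2)) =
      2 * a / √(2 * π) * exp (-(a * |b|)) *
        exp (-(1 / 2) * (a * u - a * |b| / (a * u)) ^ 2) := by
  have hsqrt : √(2 * π * u ^ 2) = √(2 * π) * u := by
    rw [sqrt_mul (by positivity), sqrt_sq hu.le]
  have hexp : -(a ^ 2 * u ^ 2 + b ^ 2 / u ^ 2) / 2 =
      -(a * |b|) + -(1 / 2) * (a * u - a * |b| / (a * u)) ^ 2 := by
    field_simp
    rw [← sq_abs b]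
    ring
  rw [smul_eq_mul, hsqrt, hexp, exp_add]
  field_simp

theorem andrews_mallows_general (a b : ℝ) (ha : 0 < a) :
    ∫ l in Ioi (0:ℝ), a / Real.sqrt (2 * π * l) *
      Real.exp (-(a ^ 2 * l + b ^ 2 / l) / 2) = Real.exp (-(a * |b|)) := by
  rw [← integral_Ioi_comp_sq,
    setIntegral_congr_fun measurableSet_Ioi fun u hu =>
      two_mul_smul_andrewsMallows_integrand_sq ha b hu,
    integral_const_mul,
    integral_comp_mul_left_Ioi (fun w => exp (-(1 / 2) * (w - a * |b| / w) ^ 2)) 0 ha,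
    mul_zero, smul_eq_mul,
    integral_Ioi_exp_neg_half_sub_const_div_sq (by positivity)]
  field_simp
end

section
/- Let y ∈ {−1, 1} and f ∈ ℝ. Then the integral over λ from 0 to ∞ of (2πλ)^(−1/2) · exp(−(1 + λ − y·f)²/(2λ)) dλ equals exp(−2·max{1 − y·f, 0}), i.e. the binary SVM pseudo-likelihood factor equals the exponentiated negative (twice) hinge loss. -/
/-!
With `a = 1 - y f` the exponent splits as `-(a + λ)² / (2λ) = -a - (a² / (2λ) + λ / 2)`.
Substituting `λ = t²` turns the remaining integral into
`e^{-|a|} √(2/π) ∫₀^∞ exp (-(t - |a|/t)² / 2) dt`, and by the Cauchy–Schlömilch substitution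
`u = t - |a|/t` the last integral is the half-line Gaussian integral `√(2π) / 2`.
Hence the pseudo-likelihood is `e^{-a-|a|} = e^{-2 max(a, 0)}`.
-/

open MeasureTheory Real Set

section CauchySchlomilch

variable {E : Type*} [NormedAddCommGroup E] [NormedSpace ℝ E] {b : ℝ}

lemma hasDerivWithinAt_sub_div (b : ℝ) {t : ℝ} (ht : 0 < t) :
    HasDerivWithinAt (fun t => t - b / t) (1 + b / t ^ 2) (Ioi 0) t := by
  have h : HasDerivAt (fun t => t - b * t⁻¹) (1 - b * -(t ^ 2)⁻¹) t :=
    (hasDerivAt_id' t).sub ((hasDerivAt_inv ht.ne').const_mul b)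
  rw [show 1 - b * -(t ^ 2)⁻¹ = 1 + b / t ^ 2 by ring] at h
  simpa only [div_eq_mul_inv] using h.hasDerivWithinAt

lemma strictMonoOn_sub_div (hb : 0 ≤ b) : StrictMonoOn (fun t => t - b / t) (Ioi 0) :=
  fun x hx y _ hxy => by
    have : b / y ≤ b / x := div_le_div_of_nonneg_left hb hx hxy.le
    dsimp only
    linarith

lemma image_sub_div_Ioi (hb : 0 < b) : (fun t => t - b / t) '' Ioi 0 = univ := by
  refine eq_univ_of_forall fun u => ?_
  -- the positive root of t ^ 2 - u t - b
  set s := √(u ^ 2 + 4 * b)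
  have hs : s ^ 2 = u ^ 2 + 4 * b := sq_sqrt (by positivity)
  have hus : |u| < s := by
    rw [← sqrt_sq_eq_abs]; exact sqrt_lt_sqrt (sq_nonneg u) (by linarith)
  have hpos : 0 < (u + s) / 2 := by linarith [neg_abs_le u]
  refine ⟨(u + s) / 2, hpos, ?_⟩
  have : b / ((u + s) / 2) = (s - u) / 2 := by
    rw [div_eq_iff hpos.ne']; nlinarith
  simp only [this]; ring

lemma hasDerivWithinAt_div (b : ℝ) {t : ℝ} (ht : 0 < t) :
    HasDerivWithinAt (fun t => b / t) (-(b / t ^ 2)) (Ioi 0) t := by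
  simpa [div_eq_mul_inv] using ((hasDerivAt_inv ht.ne').const_mul b).hasDerivWithinAt

lemma image_div_Ioi (hb : 0 < b) : (fun t => b / t) '' Ioi 0 = Ioi 0 := by
  ext u
  simp only [mem_image, mem_Ioi]
  refine ⟨fun ⟨t, ht, htu⟩ => htu ▸ div_pos hb ht, fun hu => ⟨b / u, div_pos hb hu, ?_⟩⟩
  field_simp

lemma integral_Ioi_div_sq_smul_comp_div_s5 (hb : 0 < b) (φ : ℝ → E) :
    ∫ t in Ioi 0, (b / t ^ 2) • φ (b / t) = ∫ t in Ioi 0, φ t := by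
  have hinj : InjOn (fun t => b / t) (Ioi 0) := fun x hx y hy h => by
    rw [div_eq_div_iff (ne_of_gt hx) (ne_of_gt hy)] at h
    exact (mul_left_cancel₀ hb.ne' h).symm
  have h := integral_image_eq_integral_abs_deriv_smul measurableSet_Ioi
    (fun t ht => hasDerivWithinAt_div b ht) hinj φ
  rw [image_div_Ioi hb] at h
  rw [h]
  refine setIntegral_congr_fun measurableSet_Ioi fun t ht => ?_
  rw [abs_neg, abs_of_pos (div_pos hb (pow_pos ht 2))]

lemma integral_Ioi_smul_comp_sub_div (hb : 0 < b) (ψ : ℝ → E) :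
    ∫ t in Ioi 0, (1 + b / t ^ 2) • ψ (t - b / t) = ∫ u, ψ u := by
  have h := integral_image_eq_integral_abs_deriv_smul measurableSet_Ioi
    (fun t ht => hasDerivWithinAt_sub_div b ht) (strictMonoOn_sub_div hb.le).injOn ψ
  rw [image_sub_div_Ioi hb, setIntegral_univ] at h
  rw [h]
  refine setIntegral_congr_fun measurableSet_Ioi fun t ht => ?_
  have : 0 < b / t ^ 2 := div_pos hb (pow_pos ht 2)
  rw [abs_of_pos (by linarith)]

lemma integrableOn_Ioi_smul_comp_sub_div_iff (hb : 0 < b) (ψ : ℝ → E) :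
    IntegrableOn (fun t => (1 + b / t ^ 2) • ψ (t - b / t)) (Ioi 0) ↔ Integrable ψ := by
  have h := integrableOn_image_iff_integrableOn_abs_deriv_smul measurableSet_Ioi
    (fun t ht => hasDerivWithinAt_sub_div b ht) (strictMonoOn_sub_div hb.le).injOn ψ
  rw [image_sub_div_Ioi hb, integrableOn_univ] at h
  rw [h]
  refine integrableOn_congr_fun (fun t ht => ?_) measurableSet_Ioi
  have : 0 < b / t ^ 2 := div_pos hb (pow_pos ht 2)
  rw [abs_of_pos (by linarith)]

theorem integral_Ioi_comp_sub_div_of_even_s5 {ψ : ℝ → ℝ} (hψ : Continuous ψ) (hψ_even : ψ.Even)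
    (hψ_int : Integrable ψ) (hb : 0 ≤ b) :
    ∫ t in Ioi 0, ψ (t - b / t) = ∫ t in Ioi 0, ψ t := by
  rcases hb.eq_or_lt with rfl | hb
  · simp
  have hsum_int : IntegrableOn (fun t => (1 + b / t ^ 2) * ψ (t - b / t)) (Ioi 0) :=
    (integrableOn_Ioi_smul_comp_sub_div_iff hb ψ).mpr hψ_int
  have hI_int : IntegrableOn (fun t => ψ (t - b / t)) (Ioi 0) := by
    have hcont : ContinuousOn (fun t => t - b / t) (Ioi 0) :=
      continuousOn_id.sub (continuousOn_const.div continuousOn_id fun t ht => ne_of_gt ht)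
    refine hsum_int.norm.mono'
      ((hψ.comp_continuousOn hcont).aestronglyMeasurable measurableSet_Ioi) ?_
    filter_upwards [ae_restrict_mem measurableSet_Ioi] with t ht
    rw [norm_mul]
    refine le_mul_of_one_le_left (norm_nonneg _) ?_
    rw [Real.norm_of_nonneg (by positivity)]
    linarith [div_pos hb (pow_pos ht 2)]
  have hJ_int : IntegrableOn (fun t => b / t ^ 2 * ψ (t - b / t)) (Ioi 0) :=
    (hsum_int.sub hI_int).congr_fun (fun t _ => by simp only [Pi.sub_apply]; ring) measurableSet_Ioi
  -- `t ↦ b / t` maps `t - b / t` to its negative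
  have hJ : ∫ t in Ioi 0, b / t ^ 2 * ψ (t - b / t) = ∫ t in Ioi 0, ψ (t - b / t) := by
    rw [← integral_Ioi_div_sq_smul_comp_div_s5 hb (fun t => ψ (t - b / t))]
    refine setIntegral_congr_fun measurableSet_Ioi fun t _ => ?_
    rw [div_div_cancel₀ hb.ne', smul_eq_mul, ← hψ_even, neg_sub]
  have hfull : ∫ u, ψ u = 2 * ∫ t in Ioi 0, ψ t := by
    rw [← integral_comp_abs]
    congr with u
    rcases abs_choice u with h | h <;> rw [h]
    exact (hψ_even u).symm
  have hsubst := integral_Ioi_smul_comp_sub_div hb ψ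
  simp only [smul_eq_mul, add_mul, one_mul] at hsubst
  rw [integral_add hI_int hJ_int, hJ, hfull] at hsubst
  linarith

end CauchySchlomilch

theorem integral_Ioi_exp_neg_half_mul_sq_sub_div {b : ℝ} (hb : 0 ≤ b) :
    ∫ t in Ioi 0, exp (-(1 / 2) * (t - b / t) ^ 2) = √(2 * π) / 2 := by
  rw [integral_Ioi_comp_sub_div_of_even_s5 (ψ := fun u => exp (-(1 / 2) * u ^ 2)) (by fun_prop)
    (fun u => by simp only [even_two.neg_pow]) (integrable_exp_neg_mul_sq (by norm_num)) hb,
    integral_gaussian_Ioi, show π / (1 / 2) = 2 * π by ring]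

lemma rpow_neg_half {x : ℝ} (hx : 0 ≤ x) : x ^ (-(1 : ℝ) / 2) = (√x)⁻¹ := by
  rw [neg_div, rpow_neg hx, sqrt_eq_rpow]

theorem integral_Ioi_rpow_neg_half_mul_exp_eq_exp_neg_abs (a : ℝ) :
    ∫ l in Ioi (0:ℝ), (2 * π * l) ^ (-(1:ℝ) / 2) * exp (-(a ^ 2 / (2 * l) + l / 2)) =
      exp (-|a|) := by
  rw [← integral_comp_rpow_Ioi_of_pos zero_lt_two]
  have hsubst : ∀ t ∈ Ioi (0:ℝ), (2 * t ^ ((2:ℝ) - 1)) • ((2 * π * t ^ (2:ℝ)) ^ (-(1:ℝ) / 2) *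
      exp (-(a ^ 2 / (2 * t ^ (2:ℝ)) + t ^ (2:ℝ) / 2))) =
      2 / √(2 * π) * exp (-|a|) * exp (-(1 / 2) * (t - |a| / t) ^ 2) := by
    intro t ht
    have ht : 0 < t := ht
    have hexp : a ^ 2 / (2 * t ^ 2) + t ^ 2 / 2 = |a| + 1 / 2 * (t - |a| / t) ^ 2 := by
      rw [← sq_abs a]; field_simp; ring
    rw [rpow_two, rpow_neg_half (by positivity), sqrt_mul (by positivity), sqrt_sq ht.le,
      mul_assoc _ (exp _), ← exp_add, hexp, neg_add, neg_mul, show (2:ℝ) - 1 = 1 by norm_num,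
      rpow_one, smul_eq_mul]
    field_simp
  rw [setIntegral_congr_fun measurableSet_Ioi hsubst, integral_const_mul,
    integral_Ioi_exp_neg_half_mul_sq_sub_div (abs_nonneg a)]
  field_simp

theorem binary_svm_pseudo_likelihood_general (y f : ℝ) :
    ∫ l in Ioi (0:ℝ), (2 * π * l) ^ (-(1:ℝ)/2) *
      Real.exp (-(1 + l - y * f) ^ 2 / (2 * l)) =
      Real.exp (-2 * max (1 - y * f) 0) := by
  set a := 1 - y * f
  have hsplit : ∀ l ∈ Ioi (0:ℝ), (2 * π * l) ^ (-(1:ℝ)/2) * exp (-(1 + l - y * f) ^ 2 / (2 * l)) =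
      exp (-a) * ((2 * π * l) ^ (-(1:ℝ)/2) * exp (-(a ^ 2 / (2 * l) + l / 2))) := by
    intro l hl
    have hl : l ≠ 0 := ne_of_gt hl
    rw [mul_left_comm, ← exp_add]
    congr 2
    field_simp
    ring
  rw [setIntegral_congr_fun measurableSet_Ioi hsplit, integral_const_mul,
    integral_Ioi_rpow_neg_half_mul_exp_eq_exp_neg_abs, ← exp_add]
  congr 1
  rcases le_total a 0 with h | h
  · rw [abs_of_nonpos h, max_eq_right h]; ring
  · rw [abs_of_nonneg h, max_eq_left h]; ring

theorem binary_svm_pseudo_likelihood (y f : ℝ) (hy : y = -1 ∨ y = 1) :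
    ∫ l in Ioi (0:ℝ), (2 * π * l) ^ (-(1:ℝ)/2) *
      Real.exp (-(1 + l - y * f) ^ 2 / (2 * l)) =
      Real.exp (-2 * max (1 - y * f) 0) :=
  binary_svm_pseudo_likelihood_general y f
end

section
/- Let Y = {1, …, C} with C ≥ 2, let y ∈ Y, and let f : Y → ℝ. Set b = 1 + (max over t ∈ Y, t ≠ y of f(t)) − f(y). Then ∫₀^∞ (2πλ)^(−1/2) · exp(−(b + λ)²/(2λ)) dλ = exp(−2·max{b, 0}), i.e. the multi-class pseudo-likelihood factor equals the exponential of minus twice the Crammer–Singer multi-class hinge loss. -/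
/-!
Writing `(b + l) ^ 2 = (l - |b|) ^ 2 + 4 l max b 0` splits off the factor `exp (-2 max b 0)`, and
the substitution `l = t ^ 2` turns what remains into `2 / √(2π)` times
`∫₀^∞ exp (-(t - c / t) ^ 2 / 2) dt` with `c = |b|`. By the Cauchy–Schlömilch substitution
`t = (u + √(u ^ 2 + 4c)) / 2`, a bijection `ℝ → (0, ∞)` with `t - c / t = u` and Jacobian
`(1 + u / √(u ^ 2 + 4c)) / 2`, that integral is half the Gaussian integral `√(2π)` for every
`c ≥ 0`: the odd part of the Jacobian integrates to zero against the even Gaussian.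
-/
open MeasureTheory Real Set

theorem Function.Odd.integral_eq_zero {G E : Type*} [MeasurableSpace G] [AddGroup G]
    [MeasurableNeg G] [NormedAddCommGroup E] [NormedSpace ℝ E] (μ : Measure G)
    [μ.IsNegInvariant] {f : G → E} (hf : f.Odd) : ∫ x, f x ∂μ = 0 := by
  have h := integral_neg_eq_self f μ
  simp only [hf.eq, integral_neg, neg_eq_iff_add_eq_zero, ← two_smul ℝ] at h
  exact (smul_eq_zero.mp h).resolve_left two_ne_zero

theorem Function.Even.integral_Ioi_eq_half {f : ℝ → ℝ} (hf : f.Even) :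
    ∫ x in Ioi 0, f x = (∫ x, f x) / 2 := by
  have h : ∫ x, f |x| = ∫ x, f x := by
    congr 1 with x
    rcases abs_choice x with hx | hx <;> rw [hx]
    exact hf x
  rw [← h, integral_comp_abs]
  ring

/-- For `0 < c`, the inverse of `t ↦ t - c / t : (0, ∞) → ℝ`: the positive root of
`t ^ 2 - u t - c`. -/
noncomputable def invSubDiv (c u : ℝ) : ℝ := (u + √(u ^ 2 + 4 * c)) / 2

section invSubDiv

variable {c : ℝ}

theorem abs_lt_sqrt_sq_add (hc : 0 < c) (u : ℝ) : |u| < √(u ^ 2 + 4 * c) := by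
  rw [← sqrt_sq_eq_abs]
  exact sqrt_lt_sqrt (sq_nonneg u) (by linarith)

theorem invSubDiv_pos (hc : 0 < c) (u : ℝ) : 0 < invSubDiv c u := by
  have := abs_lt_sqrt_sq_add hc u
  have := neg_abs_le u
  unfold invSubDiv
  linarith

theorem invSubDiv_sub_div (hc : 0 < c) (u : ℝ) : invSubDiv c u - c / invSubDiv c u = u := by
  have hne := (invSubDiv_pos hc u).ne'
  have hsq : √(u ^ 2 + 4 * c) ^ 2 = u ^ 2 + 4 * c := sq_sqrt (by positivity)
  field_simp
  unfold invSubDiv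
  linear_combination hsq / 4

theorem invSubDiv_sub_div_self (hc : 0 < c) {t : ℝ} (ht : 0 < t) :
    invSubDiv c (t - c / t) = t := by
  have hsq : (t - c / t) ^ 2 + 4 * c = (t + c / t) ^ 2 := by field_simp; ring
  unfold invSubDiv
  rw [hsq, sqrt_sq (by positivity)]
  ring

theorem range_invSubDiv (hc : 0 < c) : range (invSubDiv c) = Ioi 0 :=
  (range_subset_iff.2 (invSubDiv_pos hc)).antisymm fun t ht ↦
    ⟨t - c / t, invSubDiv_sub_div_self hc ht⟩

theorem hasDerivAt_invSubDiv (hc : 0 < c) (u : ℝ) :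
    HasDerivAt (invSubDiv c) ((1 + u / √(u ^ 2 + 4 * c)) / 2) u := by
  have hpos : 0 < u ^ 2 + 4 * c := by positivity
  have hsqrt := ((hasDerivAt_pow 2 u).add_const (4 * c)).sqrt hpos.ne'
  refine (((hasDerivAt_id u).add hsqrt).div_const 2).congr_deriv ?_
  field_simp
  ring

end invSubDiv

theorem integral_Ioi_comp_sub_div {F : ℝ → ℝ} (hF : Integrable F) (heven : F.Even) {c : ℝ}
    (hc : 0 ≤ c) : ∫ t in Ioi 0, F (t - c / t) = (∫ u, F u) / 2 := by
  rcases hc.eq_or_lt with rfl | hc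
  · simpa using heven.integral_Ioi_eq_half
  set s : ℝ → ℝ := fun u ↦ √(u ^ 2 + 4 * c)
  have hratio : ∀ u, |u / s u| < 1 := fun u ↦ by
    have hs := abs_lt_sqrt_sq_add hc u
    rwa [abs_div, abs_of_pos (by positivity : 0 < s u), div_lt_one (by positivity)]
  have hinj : Function.Injective (invSubDiv c) :=
    Function.LeftInverse.injective (g := fun t ↦ t - c / t) (invSubDiv_sub_div hc)
  have hchg := integral_image_eq_integral_abs_deriv_smul MeasurableSet.univ
    (fun u _ ↦ (hasDerivAt_invSubDiv hc u).hasDerivWithinAt) hinj.injOn (fun t ↦ F (t - c / t))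
  rw [image_univ, range_invSubDiv hc, Measure.restrict_univ] at hchg
  have hodd : Function.Odd fun u ↦ u / s u * F u := fun u ↦ by
    simp only [s, neg_sq, heven u]
    ring
  have hint : Integrable fun u ↦ u / s u * F u :=
    hF.bdd_mul (by fun_prop : Measurable fun u ↦ u / s u).aestronglyMeasurable
      (.of_forall fun u ↦ (hratio u).le)
  calc ∫ t in Ioi 0, F (t - c / t)
      = ∫ u, (F u + u / s u * F u) / 2 := by
        rw [hchg]
        congr 1 with u
        have hjac : 0 < (1 + u / s u) / 2 := by linarith [(abs_lt.1 (hratio u)).1]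
        rw [invSubDiv_sub_div hc, abs_of_pos hjac, smul_eq_mul]
        ring
    _ = (∫ u, F u) / 2 := by
        rw [integral_div, integral_add hF hint, hodd.integral_eq_zero volume, add_zero]

theorem integral_Ioi_exp_neg_half_mul_sub_div_sq {c : ℝ} (hc : 0 ≤ c) :
    ∫ t in Ioi 0, exp (-(1 / 2) * (t - c / t) ^ 2) = √(2 * π) / 2 := by
  have hF : Integrable fun u : ℝ ↦ exp (-(1 / 2) * u ^ 2) :=
    integrable_exp_neg_mul_sq (by norm_num)
  rw [integral_Ioi_comp_sub_div hF (fun u ↦ by simp only [neg_sq]) hc, integral_gaussian]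
  norm_num [div_div_eq_mul_div, mul_comm]

theorem integral_Ioi_rpow_mul_exp_sub_sq_div_eq_one {c : ℝ} (hc : 0 ≤ c) :
    ∫ l in Ioi 0, (2 * π * l) ^ (-(1:ℝ)/2) * exp (-(l - c) ^ 2 / (2 * l)) = 1 := by
  rw [← integral_comp_rpow_Ioi_of_pos two_pos]
  have hpt : ∀ t ∈ Ioi (0:ℝ), ((2:ℝ) * t ^ ((2:ℝ) - 1)) •
      ((2 * π * t ^ (2:ℝ)) ^ (-(1:ℝ)/2) * exp (-(t ^ (2:ℝ) - c) ^ 2 / (2 * t ^ (2:ℝ))))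
      = 2 / √(2 * π) * exp (-(1 / 2) * (t - c / t) ^ 2) := fun t (ht : 0 < t) ↦ by
    have hroot : (2 * π * t ^ 2) ^ (-(1:ℝ)/2) = (√(2 * π) * t)⁻¹ := by
      rw [neg_div, rpow_neg (by positivity), ← sqrt_eq_rpow, sqrt_mul (by positivity),
        sqrt_sq ht.le]
    have hsqrt : 0 < √(2 * π) := by positivity
    rw [show (2:ℝ) - 1 = 1 by norm_num, rpow_one, rpow_two, hroot, smul_eq_mul]
    field_simp
  rw [setIntegral_congr_fun measurableSet_Ioi hpt, integral_const_mul,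
    integral_Ioi_exp_neg_half_mul_sub_div_sq hc]
  field_simp

theorem exp_neg_add_sq_div (b : ℝ) {l : ℝ} (hl : l ≠ 0) :
    exp (-(b + l) ^ 2 / (2 * l)) = exp (-2 * max b 0) * exp (-(l - |b|) ^ 2 / (2 * l)) := by
  rw [← exp_add]
  congr 1
  field_simp
  rcases le_total b 0 with hb | hb
  · rw [max_eq_right hb, abs_of_nonpos hb]
    ring
  · rw [max_eq_left hb, abs_of_nonneg hb]
    ring

theorem multiclass_svm_pseudo_likelihood (b : ℝ) :
    ∫ l in Ioi (0:ℝ), (2 * π * l) ^ (-(1:ℝ)/2) *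
      Real.exp (-(b + l) ^ 2 / (2 * l)) = Real.exp (-2 * max b 0) := by
  have hpt : ∀ l ∈ Ioi (0:ℝ), (2 * π * l) ^ (-(1:ℝ)/2) * exp (-(b + l) ^ 2 / (2 * l)) =
      exp (-2 * max b 0) * ((2 * π * l) ^ (-(1:ℝ)/2) * exp (-(l - |b|) ^ 2 / (2 * l))) :=
    fun l (hl : 0 < l) ↦ by rw [exp_neg_add_sq_div b hl.ne', mul_left_comm]
  rw [setIntegral_congr_fun measurableSet_Ioi hpt, integral_const_mul,
    integral_Ioi_rpow_mul_exp_sub_sq_div_eq_one (abs_nonneg b), mul_one]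
end
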